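/- If G is a {2K_2, C_4}-free graph, then χ(G) ≤ ω(G) + 1. -/

import Mathlib

open SimpleGraph

/-- The disjoint union of `p` edges. -/
def pK2 (p : ℕ) : SimpleGraph (Fin p × Fin 2) where
  Adj a b := a.1 = b.1 ∧ a.2 ≠ b.2
  symm := ⟨fun _ _ h => ⟨h.1.symm, h.2.symm⟩⟩
  loopless := ⟨fun _ h => h.2 rfl⟩

/-- `G` is `H`-free: no induced subgraph of `G` is isomorphic to `H`. -/
def IsFreeOf {V W : Type*} (G : SimpleGraph V) (H : SimpleGraph W) : Prop :=
  IsEmpty (H ↪g G)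

/-- A graph on `Fin n` with edges given by a list of pairs. -/
def graphOfList (n : ℕ) (l : List (ℕ × ℕ)) : SimpleGraph (Fin n) :=
  SimpleGraph.fromRel (fun a b => ((a : ℕ), (b : ℕ)) ∈ l)

/-- The cycle on 4 vertices. -/
def C4 : SimpleGraph (Fin 4) :=
  graphOfList 4 [(0,1),(1,2),(2,3),(3,0)]

/-!
Every nonempty {2K₂, C₄}-free graph has a vertex of degree at most ω. The class is closed under
induced subgraphs, so colouring greedily along a degeneracy order uses at most ω + 1 colours.

For the degree bound, fix a maximum clique K and suppose every degree exceeds ω, so that every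
vertex has two neighbours outside K. For an edge uv outside K, C₄-freeness makes N(u) ∩ K and
N(v) ∩ K comparable, and 2K₂-freeness then lets the larger one miss at most one vertex of K.
Hence some b ∉ K misses exactly one vertex m ∈ K, and by C₄-freeness no vertex outside K is
adjacent to both b and m. Take a neighbour c ∉ K of m and two neighbours d, d' ∉ K of b:
2K₂-freeness gives c ~ d and c ~ d', and then C₄-freeness gives d ~ d'. One of d, d' misses only m
in K, yet c is adjacent to it and to m.
-/

open Finset

section

variable {V : Type*} {G : SimpleGraph V}

theorem IsFreeOf.of_embedding {V' W : Type*} {G' : SimpleGraph V'} {H : SimpleGraph W}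
    (f : G' ↪g G) (h : IsFreeOf G H) : IsFreeOf G' H :=
  ⟨fun e => h.false (f.comp e)⟩

theorem IsFreeOf.false_of_induced_2K2 (h : IsFreeOf G (pK2 2)) {w x y z : V}
    (hwx : G.Adj w x) (hyz : G.Adj y z) (hwy : ¬G.Adj w y) (hwz : ¬G.Adj w z)
    (hxy : ¬G.Adj x y) (hxz : ¬G.Adj x z) : False := by
  have := hwx.symm; have := hyz.symm
  refine h.false ⟨⟨fun p => ![![w, x], ![y, z]] p.1 p.2, fun a b hab => ?_⟩, @fun a b => ?_⟩
  · fin_cases a <;> fin_cases b <;> simp_all [G.adj_comm]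
  · fin_cases a <;> fin_cases b <;> simp_all [pK2, G.adj_comm]

theorem IsFreeOf.false_of_induced_C4 (h : IsFreeOf G C4) {p q r s : V}
    (hpq : G.Adj p q) (hqr : G.Adj q r) (hrs : G.Adj r s) (hsp : G.Adj s p)
    (hpr : ¬G.Adj p r) (hqs : ¬G.Adj q s) (hpr' : p ≠ r) (hqs' : q ≠ s) : False := by
  have := hpq.ne; have := hqr.ne; have := hrs.ne; have := hsp.ne
  refine h.false ⟨⟨![p, q, r, s], fun a b hab => ?_⟩, @fun a b => ?_⟩
  · fin_cases a <;> fin_cases b <;> simp_all [eq_comm]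
  · change G.Adj (![p, q, r, s] a) (![p, q, r, s] b) ↔ C4.Adj a b
    fin_cases a <;> fin_cases b <;> simp_all [C4, graphOfList, G.adj_comm]

theorem SimpleGraph.IsMaximumClique.exists_not_adj [Finite V] {K : Finset V}
    (hK : G.IsMaximumClique K) (v : V) : ∃ m ∈ K, ¬G.Adj v m := by
  by_contra! hv
  have hvK : v ∈ (K : Set V) :=
    hK.isMaximalClique.2 (hK.isClique.insert fun m hm _ => hv m hm) (Set.subset_insert v _)
      (Set.mem_insert v _)
  exact G.irrefl (hv v hvK)

theorem IsFreeOf.neighborSet_inter_total (h : IsFreeOf G C4) {K : Set V} (hK : G.IsClique K)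
    {u v : V} (hu : u ∉ K) (hv : v ∉ K) (huv : G.Adj u v) :
    G.neighborSet u ∩ K ⊆ G.neighborSet v ∩ K ∨ G.neighborSet v ∩ K ⊆ G.neighborSet u ∩ K := by
  refine or_iff_not_imp_left.2 fun hne y ⟨hvy, hyK⟩ => ⟨?_, hyK⟩
  obtain ⟨x, ⟨hux, hxK⟩, hvx⟩ := Set.not_subset.1 hne
  have hvx : ¬G.Adj v x := (hvx ⟨·, hxK⟩)
  have hxy : x ≠ y := by rintro rfl; exact hvx hvy
  by_contra huy
  exact h.false_of_induced_C4 hux (hK hxK hyK hxy) hvy.symm huv.symm huy (hvx ·.symm)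
    (by rintro rfl; exact hu hyK) (by rintro rfl; exact hv hxK)

theorem IsFreeOf.subsingleton_sdiff_neighborSet (h : IsFreeOf G (pK2 2)) {K : Set V}
    (hK : G.IsClique K) {p q : V} (hpq : G.Adj p q)
    (hqp : G.neighborSet q ∩ K ⊆ G.neighborSet p ∩ K) : (K \ G.neighborSet p).Subsingleton := by
  rintro x ⟨hxK, hpx⟩ y ⟨hyK, hpy⟩
  by_contra hxy
  exact h.false_of_induced_2K2 hpq (hK hxK hyK hxy) hpx hpy (fun hqx => hpx (hqp ⟨hqx, hxK⟩).1)
    (fun hqy => hpy (hqp ⟨hqy, hyK⟩).1)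

theorem subsingleton_sdiff_neighborSet_or (h₁ : IsFreeOf G (pK2 2)) (h₂ : IsFreeOf G C4)
    {K : Set V} (hK : G.IsClique K) {u v : V} (hu : u ∉ K) (hv : v ∉ K) (huv : G.Adj u v) :
    (K \ G.neighborSet u).Subsingleton ∨ (K \ G.neighborSet v).Subsingleton :=
  (h₂.neighborSet_inter_total hK hu hv huv).symm.imp
    (h₁.subsingleton_sdiff_neighborSet hK huv) (h₁.subsingleton_sdiff_neighborSet hK huv.symm)

theorem IsFreeOf.not_adj_of_sdiff_neighborSet_eq_singleton (h : IsFreeOf G C4) [Finite V]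
    {K : Finset V} (hK : G.IsMaximumClique K) {b m e : V} (hb : b ∉ K)
    (hbK : (K : Set V) \ G.neighborSet b = {m}) (he : e ∉ K) (heb : G.Adj e b) :
    ¬G.Adj e m := by
  intro hem
  have ⟨hmK, hbm⟩ : m ∈ K ∧ ¬G.Adj b m := by simpa using hbK.symm.subset rfl
  obtain ⟨y, hyK, hey⟩ := hK.exists_not_adj e
  have hym : y ≠ m := by rintro rfl; exact hey hem
  have hby : G.Adj b y := by
    by_contra hby
    exact hym (hbK.subset ⟨hyK, hby⟩)
  exact h.false_of_induced_C4 heb hby (hK.isClique hyK hmK hym) hem.symm hey hbm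
    (by rintro rfl; exact he hyK) (by rintro rfl; exact hb hmK)

theorem SimpleGraph.one_lt_card_neighborFinset_sdiff {K : Finset V} {v m : V}
    [Fintype (G.neighborSet v)] [DecidableEq V] (hm : m ∈ K) (hvm : ¬G.Adj v m)
    (hv : #K < G.degree v) :
    1 < #(G.neighborFinset v \ K) := by
  have hinter : G.neighborFinset v ∩ K ⊆ K.erase m := fun x hx => by
    rw [mem_inter, mem_neighborFinset] at hx
    exact mem_erase.2 ⟨by rintro rfl; exact hvm hx.1, hx.2⟩
  have hle := card_le_card hinter
  have hsum := card_inter_add_card_sdiff (G.neighborFinset v) K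
  rw [card_erase_of_mem hm] at hle
  rw [card_neighborFinset_eq_degree] at hsum
  have : 0 < #K := card_pos.2 ⟨m, hm⟩
  omega

theorem exists_degree_le_cliqueNum [Fintype V] [DecidableRel G.Adj] [Nonempty V]
    (h₁ : IsFreeOf G (pK2 2)) (h₂ : IsFreeOf G C4) : ∃ v, G.degree v ≤ G.cliqueNum := by
  classical
  obtain ⟨K, hK⟩ := G.maximumClique_exists
  rw [← maximumClique_card_eq_cliqueNum K hK]
  by_contra! hdeg
  have two_adj_outside (v m : V) (hm : m ∈ K) (hvm : ¬G.Adj v m) :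
      ∃ x ∉ K, ∃ y ∉ K, x ≠ y ∧ G.Adj v x ∧ G.Adj v y := by
    obtain ⟨x, hx, y, hy, hxy⟩ := one_lt_card.1 (one_lt_card_neighborFinset_sdiff hm hvm (hdeg v))
    simp only [mem_sdiff, mem_neighborFinset] at hx hy
    exact ⟨x, hx.2, y, hy.2, hxy, hx.1, hy.1⟩
  have adj_outside (v : V) : ∃ x ∉ K, G.Adj v x := by
    obtain ⟨m, hm, hvm⟩ := hK.exists_not_adj v
    obtain ⟨x, hx, -, -, -, hvx, -⟩ := two_adj_outside v m hm hvm
    exact ⟨x, hx, hvx⟩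
  obtain ⟨b, hb, hbK⟩ : ∃ b ∉ K, ((K : Set V) \ G.neighborSet b).Subsingleton := by
    obtain ⟨u, hu, -⟩ := adj_outside (Classical.arbitrary V)
    obtain ⟨w, hw, huw⟩ := adj_outside u
    rcases subsingleton_sdiff_neighborSet_or h₁ h₂ hK.isClique hu hw huw with h | h
    exacts [⟨u, hu, h⟩, ⟨w, hw, h⟩]
  obtain ⟨m, hmK, hbm⟩ := hK.exists_not_adj b
  have hbK_eq : (K : Set V) \ G.neighborSet b = {m} := hbK.eq_singleton_of_mem ⟨hmK, hbm⟩
  obtain ⟨c, hc, hmc⟩ := adj_outside m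
  have hcb : ¬G.Adj c b := fun hcb =>
    h₂.not_adj_of_sdiff_neighborSet_eq_singleton hK hb hbK_eq hc hcb hmc.symm
  obtain ⟨d, hd, d', hd', hne, hbd, hbd'⟩ := two_adj_outside b m hmK hbm
  have hdm : ¬G.Adj d m := h₂.not_adj_of_sdiff_neighborSet_eq_singleton hK hb hbK_eq hd hbd.symm
  have hd'm : ¬G.Adj d' m :=
    h₂.not_adj_of_sdiff_neighborSet_eq_singleton hK hb hbK_eq hd' hbd'.symm
  have hcx {x : V} (hbx : G.Adj b x) (hxm : ¬G.Adj x m) : G.Adj c x := by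
    by_contra hcx
    exact h₁.false_of_induced_2K2 hmc.symm hbx hcb hcx (hbm ·.symm) (hxm ·.symm)
  have hdd' : G.Adj d d' := by
    by_contra hdd'
    exact h₂.false_of_induced_C4 hbd.symm hbd' (hcx hbd' hd'm).symm (hcx hbd hdm) hdd'
      (hcb ·.symm) hne (by rintro rfl; exact hbm hmc.symm)
  rcases subsingleton_sdiff_neighborSet_or h₁ h₂ hK.isClique hd hd' hdd' with h | h
  · exact h₂.not_adj_of_sdiff_neighborSet_eq_singleton hK hd (h.eq_singleton_of_mem ⟨hmK, hdm⟩)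
      hc (hcx hbd hdm) hmc.symm
  · exact h₂.not_adj_of_sdiff_neighborSet_eq_singleton hK hd' (h.eq_singleton_of_mem ⟨hmK, hd'm⟩)
      hc (hcx hbd' hd'm) hmc.symm

theorem SimpleGraph.colorable_succ_of_forall_exists_card_neighborFinset_inter_le [Fintype V]
    [DecidableRel G.Adj] [DecidableEq V] {k : ℕ}
    (h : ∀ s : Finset V, s.Nonempty → ∃ v ∈ s, #(G.neighborFinset v ∩ s) ≤ k) :
    G.Colorable (k + 1) := by
  suffices ∀ s : Finset V, ∃ f : V → Fin (k + 1), ∀ a ∈ s, ∀ b ∈ s, G.Adj a b → f a ≠ f b by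
    obtain ⟨f, hf⟩ := this univ
    exact ⟨Coloring.mk f fun hab => hf _ (mem_univ _) _ (mem_univ _) hab⟩
  intro s
  induction s using Finset.strongInduction with
  | H s ih =>
    rcases s.eq_empty_or_nonempty with rfl | hs
    · exact ⟨0, by simp⟩
    obtain ⟨v, hv, hdeg⟩ := h s hs
    obtain ⟨f, hf⟩ := ih (s.erase v) (erase_ssubset hv)
    obtain ⟨c, -, hc⟩ : ∃ c ∈ univ, c ∉ (G.neighborFinset v ∩ s).image f :=
      exists_mem_notMem_of_card_lt_card <| by
        rw [card_univ, Fintype.card_fin]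
        exact (card_image_le.trans hdeg).trans_lt k.lt_succ_self
    have hcv {b : V} (hb : b ∈ s) (hvb : G.Adj v b) : c ≠ f b := fun hcb =>
      hc (mem_image.2 ⟨b, mem_inter.2 ⟨(G.mem_neighborFinset v b).2 hvb, hb⟩, hcb.symm⟩)
    refine ⟨Function.update f v c, fun a ha b hb hab => ?_⟩
    rcases eq_or_ne a v with rfl | hav
    · simpa [hab.ne'] using hcv hb hab
    rcases eq_or_ne b v with rfl | hbv
    · simpa [hav] using (hcv ha hab.symm).symm
    · simpa [hav, hbv] using hf a (mem_erase.2 ⟨hav, ha⟩) b (mem_erase.2 ⟨hbv, hb⟩) hab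

theorem SimpleGraph.degree_induce_coe_eq_card_neighborFinset_inter [Fintype V]
    [DecidableRel G.Adj] [DecidableEq V] (s : Finset V) (v : (s : Set V)) :
    (G.induce s).degree v = #(G.neighborFinset v ∩ s) := by
  rw [← card_neighborFinset_eq_degree, ← card_map (.subtype (· ∈ (s : Set V)))]
  convert congrArg card (map_neighborFinset_induce (G := G) v) using 2
  · congr!
  · simp

end

theorem chromatic_le_of_2K2_C4_free {V : Type*} [Fintype V] (G : SimpleGraph V)
    (h1 : IsFreeOf G (pK2 2)) (h2 : IsFreeOf G C4) :
    G.chromaticNumber ≤ ((G.cliqueNum + 1 : ℕ) : ℕ∞) := by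
  classical
  refine Colorable.chromaticNumber_le <|
    colorable_succ_of_forall_exists_card_neighborFinset_inter_le fun s hs => ?_
  have : Nonempty (s : Set V) := hs.coe_sort
  let f := Embedding.induce (G := G) s
  obtain ⟨v, hv⟩ := exists_degree_le_cliqueNum (h1.of_embedding f) (h2.of_embedding f)
  refine ⟨v, v.2, ?_⟩
  rw [← degree_induce_coe_eq_card_neighborFinset_inter]
  exact hv.trans (cliqueNum_induce_le _)
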